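/- Set ν := (1 + (2π²·0.08)^{2/3}/(3π²))^{−1} (so ν > 0.949). Let p = (x,y) with x ∈ [1/2, 1] and 0 < y ≤ 0.04, and let P := 1 + √(x² + y²) + √((1−x)² + y²) be the perimeter of the triangle with vertices (0,0), (1,0), p, whose area is y/2. Then for every real Λ with Λ ≥ π²/y² + ν·2^{4/3}π^{4/3}/y^{4/3}, one has Λ·(y/2) − (π²/16)·P²/(y/2) − 7√3π²/12 > 0. (Combined with the Airy-function eigenvalue lower bound λ₁(△^p) ≥ π²/y² + ν·2^{4/3}π^{4/3}/y^{4/3} for thin triangles, this shows J₁(△^p) > 0 on the degenerate region Ω_down = {y < 0.04}.) -/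
import Mathlib


/-- The constant `ν = (1 + (2π²·0.08)^{2/3}/(3π²))⁻¹` arising from the Airy-type
eigenvalue lower bound for thin triangles with thinness parameter `t₀ = 0.08`. -/
noncomputable def nu : ℝ :=
  (1 + (2 * Real.pi ^ 2 * 0.08) ^ ((2 : ℝ) / 3) / (3 * Real.pi ^ 2))⁻¹

lemma cube_rpow (a : ℝ) (ha : 0 ≤ a) (r : ℝ) : (a ^ r) ^ (3:ℕ) = a ^ (r * 3) := by
  rw [← Real.rpow_natCast (a ^ r) 3, ← Real.rpow_mul ha]
  norm_num

lemma nu_ge : (0.956 : ℝ) ≤ nu := by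
  have hpi : (3.141592 : ℝ) ≤ Real.pi := le_of_lt Real.pi_gt_d6
  have hpi' : Real.pi ≤ 3.1416 := by
    have := Real.pi_lt_d6; linarith
  have hbase : (0:ℝ) ≤ 2 * Real.pi ^ 2 * 0.08 := by positivity
  have h1 : 2 * Real.pi ^ 2 * 0.08 ≤ 1.5792 := by nlinarith
  have h2 : (2 * Real.pi ^ 2 * 0.08) ^ ((2:ℝ)/3) ≤ (1.5792 : ℝ) ^ ((2:ℝ)/3) :=
    Real.rpow_le_rpow hbase h1 (by norm_num)
  have h3 : (1.5792 : ℝ) ^ ((2:ℝ)/3) ≤ 1.357 := by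
    refine le_of_pow_le_pow_left₀ (n := 3) (by norm_num) (by norm_num) ?_
    rw [cube_rpow _ (by norm_num)]
    rw [show (2:ℝ)/3 * 3 = ((2:ℕ):ℝ) by norm_num, Real.rpow_natCast]
    norm_num
  have h3pi : (29.6 : ℝ) ≤ 3 * Real.pi ^ 2 := by nlinarith
  have hfrac : (2 * Real.pi ^ 2 * 0.08) ^ ((2:ℝ)/3) / (3 * Real.pi ^ 2) ≤ 1.357 / 29.6 :=
    div_le_div₀ (by norm_num) (le_trans h2 h3) (by norm_num) h3pi
  have hz : 1 + (2 * Real.pi ^ 2 * 0.08) ^ ((2:ℝ)/3) / (3 * Real.pi ^ 2) ≤ 1.046 := by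
    nlinarith
  have hzpos : (0:ℝ) < 1 + (2 * Real.pi ^ 2 * 0.08) ^ ((2:ℝ)/3) / (3 * Real.pi ^ 2) := by
    have : (0:ℝ) ≤ (2 * Real.pi ^ 2 * 0.08) ^ ((2:ℝ)/3) := Real.rpow_nonneg hbase _
    positivity
  have hinv : ((1.046 : ℝ))⁻¹ ≤ (1 + (2 * Real.pi ^ 2 * 0.08) ^ ((2:ℝ)/3) / (3 * Real.pi ^ 2))⁻¹ :=
    inv_anti₀ hzpos hz
  unfold nu
  calc (0.956 : ℝ) ≤ (1.046 : ℝ)⁻¹ := by norm_num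
    _ ≤ _ := hinv

lemma two_rpow_ge : (2.519 : ℝ) ≤ (2:ℝ) ^ ((4:ℝ)/3) := by
  refine le_of_pow_le_pow_left₀ (n := 3) (by norm_num)
    (Real.rpow_nonneg (by norm_num) _) ?_
  rw [cube_rpow _ (by norm_num)]
  rw [show (4:ℝ)/3 * 3 = ((4:ℕ):ℝ) by norm_num, Real.rpow_natCast]
  norm_num

lemma pi_rpow_ge : (4.6 : ℝ) ≤ Real.pi ^ ((4:ℝ)/3) := by
  have hpi : (3.141592 : ℝ) ≤ Real.pi := le_of_lt Real.pi_gt_d6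
  refine le_of_pow_le_pow_left₀ (n := 3) (by norm_num)
    (Real.rpow_nonneg Real.pi_nonneg _) ?_
  rw [cube_rpow _ Real.pi_nonneg]
  rw [show (4:ℝ)/3 * 3 = ((4:ℕ):ℝ) by norm_num, Real.rpow_natCast]
  calc (4.6:ℝ)^3 ≤ (3.141592:ℝ)^4 := by norm_num
    _ ≤ Real.pi ^ 4 := pow_le_pow_left₀ (by norm_num) hpi 4

lemma y_rpow_le (y : ℝ) (hy : 0 < y) (hy4 : y ≤ 0.04) :
    y ^ ((4:ℝ)/3) ≤ 0.342 * y := by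
  have h13 : y ^ ((1:ℝ)/3) ≤ 0.342 := by
    have h1 : y ^ ((1:ℝ)/3) ≤ ((0.342:ℝ)^(3:ℕ)) ^ ((1:ℝ)/3) :=
      Real.rpow_le_rpow hy.le (le_trans hy4 (by norm_num)) (by norm_num)
    have h2 : (((0.342:ℝ))^(3:ℕ)) ^ ((1:ℝ)/3) = 0.342 := by
      rw [← Real.rpow_natCast (0.342:ℝ) 3, ← Real.rpow_mul (by norm_num)]
      norm_num
    linarith [h1, h2.le]
  have hsplit : y ^ ((4:ℝ)/3) = y * y ^ ((1:ℝ)/3) := by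
    rw [show (4:ℝ)/3 = 1 + 1/3 by norm_num, Real.rpow_add hy, Real.rpow_one]
  rw [hsplit]
  nlinarith [Real.rpow_nonneg hy.le ((1:ℝ)/3)]

lemma expand_aux (y k s p : ℝ) (hy : 0 < y) :
    (p / y ^ 2 + k / (0.342 * y)) * (y / 2)
      - p / 16 * (2 + y + y^2) ^ 2 / (y / 2) - 7 * s * p / 12
      = k / 0.684 - p * (4 * (1 + y) + y * (1 + y)^2) / 8 - 7 * s * p / 12 := by
  have hyne : y ≠ 0 := ne_of_gt hy
  field_simp
  ring

lemma key_num (y k s p : ℝ) (hy : 0 < y) (hy4 : y ≤ 0.04) (hk : 11.07 ≤ k)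
    (hp0 : 0 ≤ p) (hp2 : p ≤ 9.8697) (hs : 0 ≤ s) (hs2 : s ≤ 1.7321) :
    0 < k / 0.684 - p * (4 * (1 + y) + y * (1 + y)^2) / 8 - 7 * s * p / 12 := by
  have hy2 : y^2 ≤ 0.0016 := by nlinarith
  have hy3 : y^3 ≤ 0.000064 := by nlinarith
  have hsp : s * p ≤ 1.7321 * 9.8697 := mul_le_mul hs2 hp2 hp0 (by norm_num)
  have hpy : p * y ≤ 9.8697 * 0.04 := mul_le_mul hp2 hy4 hy.le (by norm_num)
  have hpy2 : p * y^2 ≤ 9.8697 * 0.0016 := mul_le_mul hp2 hy2 (by positivity) (by norm_num)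
  have hpy3 : p * y^3 ≤ 9.8697 * 0.000064 := mul_le_mul hp2 hy3 (by positivity) (by norm_num)
  have hrw : k / 0.684 - p * (4 * (1 + y) + y * (1 + y)^2) / 8 - 7 * s * p / 12
      = k * (250/171) - (4*p + 5*(p*y) + 2*(p*y^2) + p*y^3)/8 - 7*(s*p)/12 := by
    norm_num; ring
  rw [hrw]
  linarith

/-- Positivity of `J₁` on the degenerate region: if `x ∈ [1/2,1]`, `0 < y ≤ 0.04`, and
`Λ ≥ π²/y² + ν·2^{4/3}π^{4/3}/y^{4/3}`, then
`Λ·(y/2) − (π²/16)·P²/(y/2) − 7√3π²/12 > 0`, where `P` is the perimeter of the triangle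
with vertices `(0,0)`, `(1,0)`, `(x,y)`. -/
theorem statement18 (x y Λ : ℝ) (hx : 1 / 2 ≤ x) (hx1 : x ≤ 1)
    (hy : 0 < y) (hy4 : y ≤ 0.04)
    (hΛ : Real.pi ^ 2 / y ^ 2
        + nu * 2 ^ ((4 : ℝ) / 3) * Real.pi ^ ((4 : ℝ) / 3) / y ^ ((4 : ℝ) / 3) ≤ Λ) :
    0 < Λ * (y / 2)
        - Real.pi ^ 2 / 16
          * (1 + Real.sqrt (x ^ 2 + y ^ 2) + Real.sqrt ((1 - x) ^ 2 + y ^ 2)) ^ 2 / (y / 2)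
        - 7 * Real.sqrt 3 * Real.pi ^ 2 / 12 := by
  have hpi : (3.141592 : ℝ) ≤ Real.pi := le_of_lt Real.pi_gt_d6
  have hpi' : Real.pi ≤ 3.1416 := by
    have := Real.pi_lt_d6; linarith
  set K : ℝ := nu * 2 ^ ((4 : ℝ) / 3) * Real.pi ^ ((4 : ℝ) / 3) with hKdef
  have hKnn : (0:ℝ) ≤ K := by
    have : (0:ℝ) < nu := by unfold nu; positivity
    positivity
  have hK : (11.07 : ℝ) ≤ K := by
    have h1 := nu_ge
    have h2 := two_rpow_ge
    have h3 := pi_rpow_ge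
    have hnu0 : (0:ℝ) ≤ nu := by linarith
    calc (11.07:ℝ) ≤ 0.956 * 2.519 * 4.6 := by norm_num
      _ ≤ K := by
        apply mul_le_mul (mul_le_mul h1 h2 (by norm_num) hnu0) h3 (by norm_num)
        positivity
  -- sqrt bounds
  have hs1 : Real.sqrt (x ^ 2 + y ^ 2) ≤ x + y ^ 2 := by
    rw [show x ^ 2 + y ^ 2 = (x + y^2)^2 - (2*x*y^2 + y^4 - y^2) by ring]
    calc Real.sqrt ((x + y^2)^2 - (2*x*y^2 + y^4 - y^2))
        ≤ Real.sqrt ((x + y^2)^2) := by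
          apply Real.sqrt_le_sqrt; nlinarith
      _ = x + y^2 := Real.sqrt_sq (by nlinarith)
  have hs2 : Real.sqrt ((1 - x) ^ 2 + y ^ 2) ≤ (1 - x) + y := by
    rw [show (1-x) ^ 2 + y ^ 2 = ((1-x) + y)^2 - 2*(1-x)*y by ring]
    calc Real.sqrt (((1-x) + y)^2 - 2*(1-x)*y)
        ≤ Real.sqrt (((1-x) + y)^2) := by
          apply Real.sqrt_le_sqrt; nlinarith
      _ = (1-x) + y := Real.sqrt_sq (by nlinarith)
  have hs1nn := Real.sqrt_nonneg (x ^ 2 + y ^ 2)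
  have hs2nn := Real.sqrt_nonneg ((1 - x) ^ 2 + y ^ 2)
  set P : ℝ := 1 + Real.sqrt (x ^ 2 + y ^ 2) + Real.sqrt ((1 - x) ^ 2 + y ^ 2) with hPdef
  have hP : P ≤ 2 + y + y ^ 2 := by rw [hPdef]; linarith
  have hPnn : 0 ≤ P := by rw [hPdef]; linarith
  have hQnn : (0:ℝ) ≤ 2 + y + y^2 := by nlinarith
  -- bound the subtracted perimeter term
  have hterm : Real.pi ^ 2 / 16 * P ^ 2 / (y / 2)
      ≤ Real.pi ^ 2 / 16 * (2 + y + y^2) ^ 2 / (y / 2) := by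
    gcongr
  -- bound the eigenvalue term below
  have hrpow := y_rpow_le y hy hy4
  have hrpow_pos : (0:ℝ) < y ^ ((4:ℝ)/3) := Real.rpow_pos_of_pos hy _
  have hAux : K / (0.342 * y) ≤ K / y ^ ((4:ℝ)/3) :=
    div_le_div_of_nonneg_left hKnn hrpow_pos hrpow
  have hΛ' : Real.pi ^ 2 / y ^ 2 + K / (0.342 * y) ≤ Λ := by
    calc Real.pi ^ 2 / y ^ 2 + K / (0.342 * y)
        ≤ Real.pi ^ 2 / y ^ 2 + K / y ^ ((4:ℝ)/3) := by linarith
      _ ≤ Λ := hΛ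
  have hΛy : (Real.pi ^ 2 / y ^ 2 + K / (0.342 * y)) * (y / 2) ≤ Λ * (y / 2) :=
    mul_le_mul_of_nonneg_right hΛ' (by positivity)
  -- main numeric inequality
  have hsqrt3 : Real.sqrt 3 ≤ 1.7321 := by
    nlinarith [Real.sq_sqrt (show (0:ℝ) ≤ 3 by norm_num), Real.sqrt_nonneg 3]
  have hsqrt3nn : 0 ≤ Real.sqrt 3 := Real.sqrt_nonneg 3
  have hyne : y ≠ 0 := ne_of_gt hy
  have hexpand : (Real.pi ^ 2 / y ^ 2 + K / (0.342 * y)) * (y / 2)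
      - Real.pi ^ 2 / 16 * (2 + y + y^2) ^ 2 / (y / 2)
      - 7 * Real.sqrt 3 * Real.pi ^ 2 / 12
      = K / 0.684 - Real.pi ^ 2 * (4 * (1 + y) + y * (1 + y)^2) / 8
        - 7 * Real.sqrt 3 * Real.pi ^ 2 / 12 :=
    expand_aux y K (Real.sqrt 3) (Real.pi ^ 2) hy
  have hpi2 : Real.pi ^ 2 ≤ 9.8697 :=
    calc Real.pi ^ 2 ≤ 3.1416 ^ 2 := pow_le_pow_left₀ Real.pi_nonneg hpi' 2
      _ ≤ 9.8697 := by norm_num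
  have key : 0 < (Real.pi ^ 2 / y ^ 2 + K / (0.342 * y)) * (y / 2)
      - Real.pi ^ 2 / 16 * (2 + y + y^2) ^ 2 / (y / 2)
      - 7 * Real.sqrt 3 * Real.pi ^ 2 / 12 := by
    rw [hexpand]
    exact key_num y K (Real.sqrt 3) (Real.pi ^ 2) hy hy4 hK (by positivity) hpi2
      hsqrt3nn hsqrt3
  linarith [hterm, hΛy, key]
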